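/- Define g₂ : [0, π) → ℝ by g₂(0) = 0 and g₂(x) = (cosh(x/2) + cos(x/2) - 2)/x² for x ≠ 0, so that g₂(x) = Σ_{k=0}^{∞} b_k x^{4k+2} with b_k = 1/(2^{4k+3}(4k+4)!). For n ∈ ℕ let T_{4n+2}(x) = Σ_{k=0}^{n} b_k x^{4k+2}, and for c ∈ (0, π) and m ∈ ℕ let 𝕋_{4m+6}(x) = Σ_{k=0}^{m} b_k x^{4k+2} + (g₂(c) - Σ_{k=0}^{m} b_k c^{4k+2})·(x/c)^{4m+6}, with 𝕋_2(x) = (g₂(c)/c²)·x². Then for every c ∈ (0, π), every x ∈ (0, c), and all m, n ∈ ℕ: x²/192 = T_2(x) ≤ T_{4n+2}(x) ≤ T_{4n+6}(x) ≤ g₂(x) ≤ 𝕋_{4m+6}(x) ≤ 𝕋_{4m+2}(x) ≤ 𝕋_2(x) = (g₂(c)/c²)·x². -/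

import Mathlib

open Real Set

noncomputable def g2 (x : ℝ) : ℝ :=
  if x = 0 then 0 else (Real.cosh (x / 2) + Real.cos (x / 2) - 2) / x ^ 2

/-- Maclaurin coefficients of `g₂`: `b_k = 1/(2^{4k+3}(4k+4)!)`. -/
noncomputable def bcoef (k : ℕ) : ℝ := 1 / (2 ^ (4 * k + 3) * (Nat.factorial (4 * k + 4) : ℝ))

/-- First Taylor approximation `T_{4n+2}(x) = Σ_{k=0}^n b_k x^{4k+2}`. -/
noncomputable def T (n : ℕ) (x : ℝ) : ℝ := ∑ k ∈ Finset.range (n + 1), bcoef k * x ^ (4 * k + 2)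

/-- Second Taylor approximation `𝕋_{4m+2}(x) = Σ_{k=0}^{m-1} b_k x^{4k+2} +
(g₂(c) - Σ_{k=0}^{m-1} b_k c^{4k+2})·(x/c)^{4m+2}`, with `𝕋_2(x) = (g₂(c)/c²)·x²`
(the formula specializes to this at `m = 0`); `𝕋_{4m+6}` is `TT c (m+1)`. -/
noncomputable def TT (c : ℝ) (m : ℕ) (x : ℝ) : ℝ :=
  (∑ k ∈ Finset.range m, bcoef k * x ^ (4 * k + 2)) +
    (g2 c - ∑ k ∈ Finset.range m, bcoef k * c ^ (4 * k + 2)) * (x / c) ^ (4 * m + 2)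

/-!
Since `cosh y + cos y = 2 ∑ y^(4k) / (4k)!`, `g₂(x) = ∑ b_k x^(e_k)` with `b_k > 0` and `e_k = 4k+2`,
so the partial sums increase to `g₂`. For the upper bounds put `u = x / c ≤ 1` and let `R_m` be the
tail after `m` terms: each term of `R_m(x)` is `b_k c^(e_k) u^(e_k) ≤ b_k c^(e_k) u^(e_m)`, so
`R_m(x) ≤ R_m(c) u^(e_m)`, which is `g₂(x) ≤ 𝕋_{e_m}`; and
`𝕋_{e_m} - 𝕋_{e_{m+1}} = R_{m+1}(c) (u^(e_m) - u^(e_{m+1})) ≥ 0`.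
-/

open scoped Nat

theorem hasSum_cosh_add_cos (y : ℝ) :
    HasSum (fun k : ℕ => 2 * y ^ (4 * k) / (4 * k)!) (cosh y + cos y) := by
  have hodd : ∀ n ∉ Set.range (2 * ·),
      y ^ (2 * n) / (2 * n)! + (-1) ^ n * y ^ (2 * n) / (2 * n)! = 0 := by
    intro n hn
    have : Odd n := Nat.not_even_iff_odd.mp fun ⟨j, hj⟩ => hn ⟨j, show 2 * j = n by omega⟩
    rw [this.neg_one_pow]
    ring
  convert ((mul_right_injective₀ two_ne_zero).hasSum_iff hodd).mpr
    ((hasSum_cosh y).add (hasSum_cos y)) using 1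
  funext k
  simp only [Function.comp_apply, ← mul_assoc, pow_mul, neg_one_sq, one_pow]
  ring_nf

theorem hasSum_g2 (x : ℝ) : HasSum (fun k => bcoef k * x ^ (4 * k + 2)) (g2 x) := by
  rcases eq_or_ne x 0 with rfl | hx
  · simp [g2, hasSum_zero]
  have hterm : ∀ k : ℕ, 2 * (x / 2) ^ (4 * (k + 1)) / (4 * (k + 1))! / x ^ 2
      = bcoef k * x ^ (4 * k + 2) := fun k => by
    rw [bcoef, mul_add_one, pow_add, div_pow]
    field_simp
    ring
  have h := ((hasSum_nat_add_iff' 1).mpr (hasSum_cosh_add_cos (x / 2))).div_const (x ^ 2)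
  simp only [hterm, Finset.sum_range_one] at h
  simpa [g2, hx] using h

theorem bcoef_nonneg (k : ℕ) : 0 ≤ bcoef k := by
  unfold bcoef
  positivity

theorem bcoef_zero : bcoef 0 = 1 / 192 := by
  norm_num [bcoef, Nat.factorial]

/-- `s` stands for the sum `∑ a k * c ^ e k` of the series at `c`. -/
noncomputable def secondTaylor (a : ℕ → ℝ) (e : ℕ → ℕ) (s c : ℝ) (m : ℕ) (x : ℝ) : ℝ :=
  ∑ k ∈ Finset.range m, a k * x ^ e k + (s - ∑ k ∈ Finset.range m, a k * c ^ e k) * (x / c) ^ e m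

section NonnegPowerSeries

variable {a : ℕ → ℝ} {e : ℕ → ℕ} {s c x : ℝ}

theorem secondTaylor_zero : secondTaylor a e s c 0 x = s * (x / c) ^ e 0 := by
  simp [secondTaylor]

theorem le_secondTaylor (ha : ∀ k, 0 ≤ a k) (he : Monotone e) (hc : 0 < c) (hx : 0 ≤ x)
    (hxc : x ≤ c) {t : ℝ} (ht : HasSum (fun k => a k * x ^ e k) t)
    (hs : HasSum (fun k => a k * c ^ e k) s) (m : ℕ) :
    t ≤ secondTaylor a e s c m x := by
  have hu₀ : 0 ≤ x / c := div_nonneg hx hc.le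
  have hu₁ : x / c ≤ 1 := (div_le_one hc).mpr hxc
  have hterm (k : ℕ) : a (k + m) * x ^ e (k + m) ≤ a (k + m) * c ^ e (k + m) * (x / c) ^ e m :=
    calc a (k + m) * x ^ e (k + m) = a (k + m) * c ^ e (k + m) * (x / c) ^ e (k + m) := by
          rw [div_pow]; field_simp
      _ ≤ _ := mul_le_mul_of_nonneg_left (pow_le_pow_of_le_one hu₀ hu₁ (he (Nat.le_add_left m k)))
          (mul_nonneg (ha _) (pow_nonneg hc.le _))
  have := hasSum_le hterm ((hasSum_nat_add_iff' m).mpr ht)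
    (((hasSum_nat_add_iff' m).mpr hs).mul_right _)
  unfold secondTaylor
  linarith

theorem secondTaylor_succ_le (ha : ∀ k, 0 ≤ a k) (he : Monotone e) (hc : 0 < c) (hx : 0 ≤ x)
    (hxc : x ≤ c) (hs : HasSum (fun k => a k * c ^ e k) s) (m : ℕ) :
    secondTaylor a e s c (m + 1) x ≤ secondTaylor a e s c m x := by
  have hu₀ : 0 ≤ x / c := div_nonneg hx hc.le
  have hu₁ : x / c ≤ 1 := (div_le_one hc).mpr hxc
  have htail : 0 ≤ s - ∑ k ∈ Finset.range (m + 1), a k * c ^ e k :=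
    hasSum_le (fun k => by have := ha (k + (m + 1)); positivity) hasSum_zero
      ((hasSum_nat_add_iff' (m + 1)).mpr hs)
  have hpow : (x / c) ^ e (m + 1) ≤ (x / c) ^ e m :=
    pow_le_pow_of_le_one hu₀ hu₁ (he m.le_succ)
  have hx_eq : x ^ e m = c ^ e m * (x / c) ^ e m := by
    rw [div_pow]; field_simp
  have hdiff : secondTaylor a e s c m x - secondTaylor a e s c (m + 1) x =
      (s - ∑ k ∈ Finset.range (m + 1), a k * c ^ e k) * ((x / c) ^ e m - (x / c) ^ e (m + 1)) := by
    simp only [secondTaylor, Finset.sum_range_succ, hx_eq]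
    ring
  nlinarith [mul_nonneg htail (sub_nonneg.mpr hpow)]

theorem antitone_secondTaylor (ha : ∀ k, 0 ≤ a k) (he : Monotone e) (hc : 0 < c) (hx : 0 ≤ x)
    (hxc : x ≤ c) (hs : HasSum (fun k => a k * c ^ e k) s) :
    Antitone (secondTaylor a e s c · x) :=
  antitone_nat_of_succ_le (secondTaylor_succ_le ha he hc hx hxc hs)

end NonnegPowerSeries

theorem bcoef_mul_pow_nonneg (k : ℕ) (x : ℝ) : 0 ≤ bcoef k * x ^ (4 * k + 2) :=
  mul_nonneg (bcoef_nonneg k) (Even.pow_nonneg ⟨2 * k + 1, by ring⟩ x)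

theorem T_zero (x : ℝ) : T 0 x = x ^ 2 / 192 := by
  rw [T, Finset.sum_range_one, bcoef_zero]
  ring

theorem monotone_T (x : ℝ) : Monotone (T · x) :=
  monotone_nat_of_le_succ fun n => by
    simp only [T, Finset.sum_range_succ _ (n + 1)]
    exact le_add_of_nonneg_right (bcoef_mul_pow_nonneg _ x)

theorem T_le_g2 (n : ℕ) (x : ℝ) : T n x ≤ g2 x :=
  sum_le_hasSum _ (fun k _ => bcoef_mul_pow_nonneg k x) (hasSum_g2 x)

theorem TT_eq_secondTaylor (c : ℝ) (m : ℕ) (x : ℝ) :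
    TT c m x = secondTaylor bcoef (4 * · + 2) (g2 c) c m x :=
  rfl

theorem g2_double_sided_taylor (c : ℝ) (hc : c ∈ Ioo 0 π)
    (x : ℝ) (hx : x ∈ Ioo 0 c) (m n : ℕ) :
    x ^ 2 / 192 = T 0 x ∧
    T 0 x ≤ T n x ∧
    T n x ≤ T (n + 1) x ∧
    T (n + 1) x ≤ g2 x ∧
    g2 x ≤ TT c (m + 1) x ∧
    TT c (m + 1) x ≤ TT c m x ∧
    TT c m x ≤ TT c 0 x ∧
    TT c 0 x = (g2 c / c ^ 2) * x ^ 2 := by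
  obtain ⟨hc₀, -⟩ := hc
  obtain ⟨hx₀, hxc⟩ := hx
  have he : Monotone (4 * · + 2 : ℕ → ℕ) := fun i j h => by dsimp only; omega
  have hTT := antitone_secondTaylor bcoef_nonneg he hc₀ hx₀.le hxc.le (hasSum_g2 c)
  refine ⟨(T_zero x).symm, monotone_T x n.zero_le, monotone_T x n.le_succ, T_le_g2 _ x,
    le_secondTaylor bcoef_nonneg he hc₀ hx₀.le hxc.le (hasSum_g2 x) (hasSum_g2 c) _,
    hTT m.le_succ, hTT m.zero_le, ?_⟩
  rw [TT_eq_secondTaylor, secondTaylor_zero]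
  ring
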